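/- arXiv:0910.1380 — 6 statements merged into one kernel-verified Lean document; each statement's English description precedes it below -/
import Mathlib

section
/- For real μ > 0, β > 0, and δ ∈ ℝ, the integral ∫₀^∞ x^{μ−1} e^{−βx} sin(δx) dx equals Γ(μ) sin(μ arctan(δ/β)) / (β² + δ²)^{μ/2}. -/
/-!
With `z = β - δ i`, the integral is the imaginary part of `∫₀^∞ t^(μ-1) e^(-z t) dt`. For
`Re z > 0` this equals `Γ(μ) z^(-μ)`: both sides are holomorphic on the right half-plane and
agree on the positive real axis (substitute `t ↦ t / z`), so they agree everywhere by the
identity theorem. Finally `|z| = √(β² + δ²)` and `arg z = -arctan (δ / β)`.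
-/

open MeasureTheory Set Filter Topology

namespace Complex

lemma norm_cpow_sub_one_mul_exp_neg_mul (a z : ℂ) {t : ℝ} (ht : 0 < t) :
    ‖(t : ℂ) ^ (a - 1) * exp (-(z * t))‖ = t ^ (a.re - 1) * Real.exp (-(z.re * t)) := by
  rw [norm_mul, norm_cpow_eq_rpow_re_of_pos ht, norm_exp]
  simp

lemma aestronglyMeasurable_cpow_sub_one_mul_exp_neg_mul (a z : ℂ) :
    AEStronglyMeasurable (fun t : ℝ ↦ (t : ℂ) ^ (a - 1) * exp (-(z * t)))
      (volume.restrict (Ioi 0)) := by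
  fun_prop

lemma integrableOn_cpow_sub_one_mul_exp_neg_mul {a z : ℂ} (ha : 0 < a.re) (hz : 0 < z.re) :
    IntegrableOn (fun t : ℝ ↦ (t : ℂ) ^ (a - 1) * exp (-(z * t))) (Ioi 0) := by
  have hreal : IntegrableOn (fun t : ℝ ↦ t ^ (a.re - 1) * Real.exp (-z.re * t)) (Ioi 0) := by
    simpa using integrableOn_rpow_mul_exp_neg_mul_rpow (by linarith) one_pos hz
  refine hreal.mono' (aestronglyMeasurable_cpow_sub_one_mul_exp_neg_mul a z) ?_
  filter_upwards [ae_restrict_mem measurableSet_Ioi] with t ht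
  rw [norm_cpow_sub_one_mul_exp_neg_mul a z ht, neg_mul]

lemma differentiableAt_integral_cpow_sub_one_mul_exp_neg_mul {a z : ℂ} (ha : 0 < a.re)
    (hz : 0 < z.re) :
    DifferentiableAt ℂ (fun w ↦ ∫ t in Ioi (0 : ℝ), (t : ℂ) ^ (a - 1) * exp (-(w * t))) z := by
  have hs : {w : ℂ | z.re / 2 < w.re} ∈ 𝓝 z :=
    (isOpen_lt continuous_const continuous_re).mem_nhds (show z.re / 2 < z.re by linarith)
  have hbound : IntegrableOn (fun t : ℝ ↦ t ^ a.re * Real.exp (-(z.re / 2) * t)) (Ioi 0) := by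
    simpa using integrableOn_rpow_mul_exp_neg_mul_rpow (by linarith) one_pos (half_pos hz)
  refine (hasDerivAt_integral_of_dominated_loc_of_deriv_le
    (F' := fun w (t : ℝ) ↦ (t : ℂ) ^ (a - 1) * (exp (-(w * t)) * -t)) hs
    (.of_forall fun w ↦ aestronglyMeasurable_cpow_sub_one_mul_exp_neg_mul a w)
    (integrableOn_cpow_sub_one_mul_exp_neg_mul ha hz) (by fun_prop) ?_ hbound
    ?_).2.differentiableAt
  · filter_upwards [ae_restrict_mem measurableSet_Ioi]
      with t (ht : 0 < t) w (hw : z.re / 2 < w.re)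
    rw [← mul_assoc, norm_mul, norm_cpow_sub_one_mul_exp_neg_mul a w ht, norm_neg, norm_real,
      Real.norm_of_nonneg ht.le, mul_right_comm, ← Real.rpow_add_one ht.ne', sub_add_cancel]
    gcongr
    nlinarith
  · filter_upwards with t w _
    exact ((hasDerivAt_mul_const (t : ℂ)).neg.cexp).const_mul _

theorem integral_cpow_sub_one_mul_exp_neg_mul_Ioi {a z : ℂ} (ha : 0 < a.re) (hz : 0 < z.re) :
    ∫ t in Ioi (0 : ℝ), (t : ℂ) ^ (a - 1) * exp (-(z * t)) = Gamma a * z ^ (-a) := by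
  have hU : IsOpen {w : ℂ | 0 < w.re} := isOpen_lt continuous_const continuous_re
  have hF : AnalyticOnNhd ℂ (fun w ↦ ∫ t in Ioi (0 : ℝ), (t : ℂ) ^ (a - 1) * exp (-(w * t)))
      {w | 0 < w.re} := DifferentiableOn.analyticOnNhd (fun w hw ↦
    (differentiableAt_integral_cpow_sub_one_mul_exp_neg_mul ha hw).differentiableWithinAt) hU
  have hG : AnalyticOnNhd ℂ (fun w ↦ Gamma a * w ^ (-a)) {w | 0 < w.re} :=
    DifferentiableOn.analyticOnNhd (fun w hw ↦ ((differentiableAt_id.cpow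
      (differentiableAt_const _) (.inl hw)).const_mul _).differentiableWithinAt) hU
  have hreal : ∀ r : ℝ, 0 < r →
      ∫ t in Ioi (0 : ℝ), (t : ℂ) ^ (a - 1) * exp (-(r * t)) = Gamma a * (r : ℂ) ^ (-a) := by
    intro r hr
    rw [integral_cpow_mul_exp_neg_mul_Ioi ha hr, mul_comm, cpow_neg, one_div,
      inv_cpow _ _ (by simpa [arg_ofReal_of_nonneg hr.le] using Real.pi_ne_zero.symm)]
  have hofReal : Tendsto ((↑) : ℝ → ℂ) (𝓝[>] 1) (𝓝[≠] 1) :=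
    continuous_ofReal.continuousWithinAt.tendsto_nhdsWithin fun r (hr : 1 < r) ↦ by
      simpa using hr.ne'
  refine hF.eqOn_of_preconnected_of_frequently_eq hG (convex_halfSpace_re_gt 0).isPreconnected
    (by simp) (hofReal.frequently ?_) hz
  exact (eventually_nhdsWithin_of_forall (s := Ioi 1) fun r hr ↦
    hreal r (one_pos.trans hr)).frequently

lemma arg_eq_arctan_of_re_pos {z : ℂ} (hz : 0 < z.re) : arg z = Real.arctan (z.im / z.re) := by
  have hbound := abs_lt.mp (abs_arg_lt_pi_div_two_iff.mpr (.inl hz))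
  rw [← tan_arg, Real.arctan_tan hbound.1 hbound.2]

lemma im_cpow_sub_one_mul_exp_neg_mul (μ β δ : ℝ) {t : ℝ} (ht : 0 < t) :
    ((t : ℂ) ^ ((μ : ℂ) - 1) * exp (-((β - δ * I) * t))).im
      = t ^ (μ - 1) * Real.exp (-β * t) * Real.sin (δ * t) := by
  rw [← ofReal_one, ← ofReal_sub, ← ofReal_cpow ht.le, im_ofReal_mul, exp_im]
  simp [mul_assoc]

lemma im_Gamma_mul_cpow_neg (μ β δ : ℝ) (hβ : 0 < β) :
    (Gamma μ * (β - δ * I) ^ (-(μ : ℂ))).im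
      = Real.Gamma μ * Real.sin (μ * Real.arctan (δ / β)) / (β ^ 2 + δ ^ 2) ^ (μ / 2) := by
  have harg : arg (β - δ * I) = -Real.arctan (δ / β) := by
    rw [arg_eq_arctan_of_re_pos (by simpa using hβ)]
    simp [neg_div]
  have hnorm : ‖(β : ℂ) - δ * I‖ = (β ^ 2 + δ ^ 2) ^ (1 / 2 : ℝ) := by
    rw [← Real.sqrt_eq_rpow, norm_def]
    simp [normSq_apply, sq]
  rw [Gamma_ofReal, ← ofReal_neg, im_ofReal_mul, cpow_ofReal_im, harg, hnorm,
    ← Real.rpow_mul (by positivity), show (1 / 2 : ℝ) * -μ = -(μ / 2) by ring,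
    Real.rpow_neg (by positivity), neg_mul_neg, mul_comm _ μ]
  ring

end Complex

theorem stmt1 (μ β δ : ℝ) (hμ : 0 < μ) (hβ : 0 < β) :
    ∫ x in Set.Ioi (0 : ℝ), x ^ (μ - 1) * Real.exp (-β * x) * Real.sin (δ * x)
      = Real.Gamma μ * Real.sin (μ * Real.arctan (δ / β)) /
          (β ^ 2 + δ ^ 2) ^ (μ / 2) := by
  set z : ℂ := β - δ * Complex.I
  have hz : 0 < z.re := by simpa [z] using hβ
  have ha : 0 < (μ : ℂ).re := by simpa using hμ
  calc ∫ x in Ioi (0 : ℝ), x ^ (μ - 1) * Real.exp (-β * x) * Real.sin (δ * x)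
      = ∫ t in Ioi (0 : ℝ), ((t : ℂ) ^ ((μ : ℂ) - 1) * Complex.exp (-(z * t))).im :=
        setIntegral_congr_fun measurableSet_Ioi fun t ht ↦
          (Complex.im_cpow_sub_one_mul_exp_neg_mul μ β δ ht).symm
    _ = (∫ t in Ioi (0 : ℝ), (t : ℂ) ^ ((μ : ℂ) - 1) * Complex.exp (-(z * t))).im :=
        integral_im (Complex.integrableOn_cpow_sub_one_mul_exp_neg_mul ha hz)
    _ = (Complex.Gamma μ * z ^ (-(μ : ℂ))).im := by
        rw [Complex.integral_cpow_sub_one_mul_exp_neg_mul_Ioi ha hz]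
    _ = _ := Complex.im_Gamma_mul_cpow_neg μ β δ hβ
end

section
/- For real μ > 0, β > 0, and δ ∈ ℝ, the integral ∫₀^∞ x^{μ−1} e^{−βx} cos(δx) dx equals Γ(μ) cos(μ arctan(δ/β)) / (β² + δ²)^{μ/2}. -/
/-!
For `Re w > 0` one has `∫₀^∞ t^(a-1) e^(-w t) dt = Γ(a) w^(-a)`: both sides are holomorphic in `w`
on the right half-plane and agree for real `w > 0`, so they agree everywhere by the identity
principle. Taking `w = β + δ i`, the integral in question is the real part of the left-hand side,
and `w^(-μ) = |w|^(-μ) e^(-i μ arg w)` with `arg w = arctan (δ / β)`.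
-/

open MeasureTheory Set Filter Topology
open scoped Complex

lemma integrableOn_rpow_mul_exp_neg_mul {s c : ℝ} (hs : -1 < s) (hc : 0 < c) :
    IntegrableOn (fun t : ℝ => t ^ s * Real.exp (-(c * t))) (Ioi 0) := by
  simpa [Real.rpow_one] using integrableOn_rpow_mul_exp_neg_mul_rpow hs zero_lt_one hc

lemma norm_cpow_mul_cexp_neg_mul {t : ℝ} (ht : 0 < t) (a w : ℂ) :
    ‖(t : ℂ) ^ a * cexp (-(w * t))‖ = t ^ a.re * Real.exp (-(w.re * t)) := by
  rw [norm_mul, Complex.norm_cpow_eq_rpow_re_of_pos ht, Complex.norm_exp]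
  simp

lemma continuousOn_cpow_mul_cexp_neg_mul (a w : ℂ) :
    ContinuousOn (fun t : ℝ => (t : ℂ) ^ a * cexp (-(w * t))) (Ioi 0) := by
  refine ContinuousOn.mul (fun t ht => ?_) (by fun_prop)
  exact ((continuousAt_cpow_const (Complex.ofReal_mem_slitPlane.2 ht)).comp
    Complex.continuous_ofReal.continuousAt).continuousWithinAt

lemma integrableOn_cpow_mul_cexp_neg_mul {a w : ℂ} (ha : -1 < a.re) (hw : 0 < w.re) :
    IntegrableOn (fun t : ℝ => (t : ℂ) ^ a * cexp (-(w * t))) (Ioi 0) := by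
  refine (integrableOn_rpow_mul_exp_neg_mul ha hw).mono'
    ((continuousOn_cpow_mul_cexp_neg_mul a w).aestronglyMeasurable measurableSet_Ioi) ?_
  filter_upwards [ae_restrict_mem measurableSet_Ioi] with t ht
  exact (norm_cpow_mul_cexp_neg_mul ht a w).le

lemma hasDerivAt_cpow_mul_cexp_neg_mul {t : ℝ} (ht : 0 < t) (a w : ℂ) :
    HasDerivAt (fun w : ℂ => (t : ℂ) ^ a * cexp (-(w * t)))
      (-((t : ℂ) ^ (a + 1) * cexp (-(w * t)))) w := by
  have hexp : HasDerivAt (fun w : ℂ => cexp (-(w * t))) (cexp (-(w * t)) * -(t : ℂ)) w :=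
    (((hasDerivAt_id w).mul_const (t : ℂ)).neg.congr_deriv (by simp)).cexp
  refine (hexp.const_mul ((t : ℂ) ^ a)).congr_deriv ?_
  rw [Complex.cpow_add _ _ (Complex.ofReal_ne_zero.2 ht.ne'), Complex.cpow_one]
  ring

lemma differentiableOn_integral_cpow_mul_cexp_neg_mul {a : ℂ} (ha : -1 < a.re) :
    DifferentiableOn ℂ (fun w : ℂ => ∫ t in Ioi (0 : ℝ), (t : ℂ) ^ a * cexp (-(w * t)))
      {w | 0 < w.re} := by
  intro w₀ (hw₀ : 0 < w₀.re)
  set ε := w₀.re / 2 with hε_def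
  have hε : 0 < ε := half_pos hw₀
  have re_ge : ∀ w ∈ Metric.ball w₀ ε, ε ≤ w.re := fun w hw => by
    have := (Complex.abs_re_le_norm (w - w₀)).trans_lt (mem_ball_iff_norm.mp hw)
    rw [Complex.sub_re, abs_lt] at this
    linarith [this.1]
  have hderiv := hasDerivAt_integral_of_dominated_loc_of_deriv_le
    (μ := volume.restrict (Ioi 0))
    (F' := fun w (t : ℝ) => -((t : ℂ) ^ (a + 1) * cexp (-(w * t)))) (Metric.ball_mem_nhds w₀ hε)
    (Eventually.of_forall fun w =>
      (continuousOn_cpow_mul_cexp_neg_mul a w).aestronglyMeasurable measurableSet_Ioi)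
    (integrableOn_cpow_mul_cexp_neg_mul ha hw₀)
    ((continuousOn_cpow_mul_cexp_neg_mul (a + 1) w₀).neg.aestronglyMeasurable measurableSet_Ioi)
    (bound := fun t => t ^ (a.re + 1) * Real.exp (-(ε * t))) ?_
    (integrableOn_rpow_mul_exp_neg_mul (by linarith) hε) ?_
  · exact hderiv.2.differentiableAt.differentiableWithinAt
  · filter_upwards [ae_restrict_mem measurableSet_Ioi] with t (ht : 0 < t) w hw
    rw [norm_neg, norm_cpow_mul_cexp_neg_mul ht, Complex.add_re, Complex.one_re]
    gcongr
    exact re_ge w hw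
  · filter_upwards [ae_restrict_mem measurableSet_Ioi] with t ht w _
    exact hasDerivAt_cpow_mul_cexp_neg_mul ht a w

theorem integral_cpow_mul_cexp_neg_mul_Ioi {a w : ℂ} (ha : 0 < a.re) (hw : 0 < w.re) :
    ∫ t in Ioi (0 : ℝ), (t : ℂ) ^ (a - 1) * cexp (-(w * t)) = Complex.Gamma a * w ^ (-a) := by
  have hopen : IsOpen {w : ℂ | 0 < w.re} := isOpen_lt continuous_const Complex.continuous_re
  have lhs := (differentiableOn_integral_cpow_mul_cexp_neg_mul
    (a := a - 1) (by simp; linarith)).analyticOnNhd hopen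
  have rhs : AnalyticOnNhd ℂ (fun w : ℂ => Complex.Gamma a * w ^ (-a)) {w | 0 < w.re} :=
    DifferentiableOn.analyticOnNhd (fun w hw => ((differentiableAt_id.cpow
      (differentiableAt_const _) (Or.inl hw)).const_mul _).differentiableWithinAt) hopen
  have eq_of_real : ∀ r : ℝ, 0 < r →
      ∫ t in Ioi (0 : ℝ), (t : ℂ) ^ (a - 1) * cexp (-(r * t)) = Complex.Gamma a * r ^ (-a) := by
    intro r hr
    have harg : (r : ℂ).arg ≠ Real.pi := by
      rw [Complex.arg_ofReal_of_nonneg hr.le]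
      exact Real.pi_ne_zero.symm
    rw [Complex.integral_cpow_mul_exp_neg_mul_Ioi ha hr, one_div, Complex.inv_cpow _ _ harg,
      ← Complex.cpow_neg, mul_comm]
  have real_to_punctured : Tendsto ((↑) : ℝ → ℂ) (𝓝[>] 1) (𝓝[≠] 1) :=
    Complex.continuous_ofReal.continuousWithinAt.tendsto_nhdsWithin fun r hr => by
      simpa using hr.ne'
  refine lhs.eqOn_of_preconnected_of_frequently_eq rhs
    (convex_halfSpace_re_gt 0).isPreconnected (by simp : (0 : ℝ) < (1 : ℂ).re)
    (real_to_punctured.frequently (eventually_nhdsWithin_of_forall (s := Ioi (1 : ℝ)) fun r hr =>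
      eq_of_real r (zero_lt_one.trans hr)).frequently) hw

lemma arg_eq_arctan_of_re_pos {z : ℂ} (hz : 0 < z.re) : z.arg = Real.arctan (z.im / z.re) := by
  have hbound := abs_lt.mp (Complex.abs_arg_lt_pi_div_two_iff.mpr (Or.inl hz))
  rw [← Complex.tan_arg, Real.arctan_tan hbound.1 hbound.2]

lemma re_cpow_neg_ofReal {z : ℂ} (hz : 0 < z.re) (μ : ℝ) :
    (z ^ (-(μ : ℂ))).re
      = Real.cos (μ * Real.arctan (z.im / z.re)) / (z.re ^ 2 + z.im ^ 2) ^ (μ / 2) := by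
  have hpos : 0 ≤ z.re ^ 2 + z.im ^ 2 := by positivity
  rw [← Complex.ofReal_neg, Complex.cpow_ofReal_re, arg_eq_arctan_of_re_pos hz,
    Complex.norm_eq_sqrt_sq_add_sq, Real.sqrt_eq_rpow, ← Real.rpow_mul hpos,
    show 1 / 2 * -μ = -(μ / 2) by ring, Real.rpow_neg hpos, mul_neg, Real.cos_neg,
    mul_comm (Real.arctan _) μ, inv_mul_eq_div]

lemma integral_rpow_mul_exp_neg_mul_mul_cos {μ β : ℝ} (hμ : 0 < μ) (hβ : 0 < β) (δ : ℝ) :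
    ∫ x in Ioi (0 : ℝ), x ^ (μ - 1) * Real.exp (-β * x) * Real.cos (δ * x)
      = (∫ t in Ioi (0 : ℝ), (t : ℂ) ^ ((μ : ℂ) - 1) * cexp (-((β + δ * Complex.I) * t))).re := by
  rw [← RCLike.re_to_complex, ← integral_re
    (integrableOn_cpow_mul_cexp_neg_mul (by simpa using hμ) (by simpa using hβ))]
  refine setIntegral_congr_fun measurableSet_Ioi fun x (hx : 0 < x) => ?_
  rw [RCLike.re_to_complex, ← Complex.ofReal_one, ← Complex.ofReal_sub,
    ← Complex.ofReal_cpow hx.le, Complex.re_ofReal_mul, Complex.exp_re]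
  simp [neg_mul, mul_assoc]

theorem stmt2 (μ β δ : ℝ) (hμ : 0 < μ) (hβ : 0 < β) :
    ∫ x in Set.Ioi (0 : ℝ), x ^ (μ - 1) * Real.exp (-β * x) * Real.cos (δ * x)
      = Real.Gamma μ * Real.cos (μ * Real.arctan (δ / β)) /
          (β ^ 2 + δ ^ 2) ^ (μ / 2) := by
  have hw : 0 < ((β : ℂ) + δ * Complex.I).re := by simpa using hβ
  rw [integral_rpow_mul_exp_neg_mul_mul_cos hμ hβ,
    integral_cpow_mul_cexp_neg_mul_Ioi (by simpa using hμ) hw, Complex.Gamma_ofReal,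
    Complex.re_ofReal_mul, re_cpow_neg_ofReal hw, mul_div_assoc]
  simp
end

section
/- Let F : ℝ × ℝ → ℝ be continuous with support contained in [x₀−r, x₀+r] × [0,h] where r, h > 0 and y₀ > 0. Define G(v) = |∫_{ℝ} F(x₀ + v + u, y₀ + v² − u²) du|. Then lim_{v→∞} v · G(v) ≤ (1/2) · (sup |F|) · h. -/
/-!
Let `A = y₀ + v²`. For `v ≥ r` the integrand can be nonzero only where `u ≤ r - v ≤ 0` and
`A - h ≤ u² ≤ A`, i.e. on the interval `[-√A, -√(A - h)]`, whose length
`√A - √(A - h) ≤ h / (2√(A - h))` is of order `h / (2v)`. Hence `v · G(v)` is at most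
`(sup |F|) · (h / 2) · v / √(v² + y₀ - h)`, which tends to `(sup |F|) · h / 2`.
-/

open MeasureTheory Filter Real Set Topology

lemma sqrt_sub_sqrt_le_div {a b : ℝ} (hb : 0 < b) (hba : b ≤ a) :
    √a - √b ≤ (a - b) / (2 * √b) := by
  have hsb : 0 < √b := sqrt_pos.mpr hb
  rw [le_div_iff₀ (by positivity)]
  nlinarith [sq_sqrt hb.le, sq_sqrt (hb.le.trans hba), sqrt_le_sqrt hba]

lemma tendsto_div_sqrt_sq_add_atTop (c : ℝ) :
    Tendsto (fun v : ℝ => v / √(v ^ 2 + c)) atTop (𝓝 1) := by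
  have hlim : Tendsto (fun v : ℝ => (√(1 + c / v ^ 2))⁻¹) atTop (𝓝 1) := by
    simpa using ((tendsto_const_nhds.div_atTop (tendsto_pow_atTop two_ne_zero)).const_add
      (1 : ℝ)).sqrt.inv₀ (by norm_num : √(1 + 0 : ℝ) ≠ 0)
  refine hlim.congr' ?_
  filter_upwards [eventually_gt_atTop 0] with v hv
  rw [show v ^ 2 + c = v ^ 2 * (1 + c / v ^ 2) by field_simp, sqrt_mul (sq_nonneg v),
    sqrt_sq hv.le, div_mul_cancel_left₀ hv.ne']

lemma abs_integral_le_of_forall_notMem_Icc {f : ℝ → ℝ} {a b M : ℝ} (hab : a ≤ b)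
    (hM : ∀ u ∈ Icc a b, |f u| ≤ M) (hf : ∀ u ∉ Icc a b, f u = 0) :
    |∫ u, f u| ≤ M * (b - a) := by
  rw [← setIntegral_eq_integral_of_forall_compl_eq_zero hf]
  have := norm_setIntegral_le_of_norm_le_const (μ := volume) (f := f)
    (measure_Icc_lt_top (a := a) (b := b)) hM
  rwa [measureReal_def, volume_Icc, ENNReal.toReal_ofReal (sub_nonneg.mpr hab)] at this

section Parabola

variable {F : ℝ × ℝ → ℝ} {x₀ y₀ r h : ℝ}

lemma mem_Icc_of_parabola_ne_zero
    (hsupp : Function.support F ⊆ Icc (x₀ - r) (x₀ + r) ×ˢ Icc 0 h) {v u : ℝ} (hrv : r ≤ v)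
    (hu : F (x₀ + v + u, y₀ + v ^ 2 - u ^ 2) ≠ 0) :
    u ∈ Icc (-√(y₀ + v ^ 2)) (-√(y₀ + v ^ 2 - h)) := by
  obtain ⟨⟨-, hx⟩, hy₁, hy₂⟩ := hsupp hu
  have hu₀ : u ≤ 0 := by simp only at hx; linarith
  have habs : √(u ^ 2) = -u := by rw [sqrt_sq_eq_abs, abs_of_nonpos hu₀]
  constructor
  · have := sqrt_le_sqrt (show u ^ 2 ≤ y₀ + v ^ 2 by simp only at hy₁; linarith)
    linarith
  · have := sqrt_le_sqrt (show y₀ + v ^ 2 - h ≤ u ^ 2 by simp only at hy₂; linarith)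
    linarith

lemma abs_integral_parabola_le
    (hsupp : Function.support F ⊆ Icc (x₀ - r) (x₀ + r) ×ˢ Icc 0 h) (hh : 0 ≤ h) {M : ℝ}
    (hM : ∀ p, |F p| ≤ M) {v : ℝ} (hrv : r ≤ v) (hpos : 0 < y₀ + v ^ 2 - h) :
    |∫ u : ℝ, F (x₀ + v + u, y₀ + v ^ 2 - u ^ 2)| ≤ M * h / (2 * √(y₀ + v ^ 2 - h)) := by
  have hlen := sqrt_sub_sqrt_le_div hpos (by linarith : y₀ + v ^ 2 - h ≤ y₀ + v ^ 2)
  have hM₀ : 0 ≤ M := (abs_nonneg _).trans (hM 0)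
  calc |∫ u : ℝ, F (x₀ + v + u, y₀ + v ^ 2 - u ^ 2)|
      ≤ M * (-√(y₀ + v ^ 2 - h) - -√(y₀ + v ^ 2)) :=
        abs_integral_le_of_forall_notMem_Icc (neg_le_neg (sqrt_le_sqrt (by linarith)))
          (fun u _ => hM _)
          fun u hu => by_contra fun hFu => hu (mem_Icc_of_parabola_ne_zero hsupp hrv hFu)
    _ ≤ M * ((y₀ + v ^ 2 - (y₀ + v ^ 2 - h)) / (2 * √(y₀ + v ^ 2 - h))) := by gcongr; linarith
    _ = M * h / (2 * √(y₀ + v ^ 2 - h)) := by ring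

end Parabola

theorem stmt3_general (F : ℝ × ℝ → ℝ) (hF : Continuous F) (x₀ y₀ r h : ℝ)
    (hh : 0 < h)
    (hsupp : Function.support F ⊆ Set.Icc (x₀ - r) (x₀ + r) ×ˢ Set.Icc 0 h) :
    Filter.limsup (fun v : ℝ => v * |∫ u : ℝ, F (x₀ + v + u, y₀ + v ^ 2 - u ^ 2)|)
        Filter.atTop ≤ (1 / 2) * (⨆ p, |F p|) * h := by
  have hcs : HasCompactSupport F :=
    .intro (isCompact_Icc.prod isCompact_Icc) fun p hp => by_contra fun hFp => hp (hsupp hFp)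
  have hbdd : BddAbove (range fun p => |F p|) := by
    simpa only [norm_eq_abs] using hF.norm.bddAbove_range_of_hasCompactSupport hcs.norm
  set M := ⨆ p, |F p|
  have hlim : Tendsto (fun v : ℝ => M * h / 2 * (v / √(v ^ 2 + (y₀ - h)))) atTop
      (𝓝 (1 / 2 * M * h)) := by
    convert (tendsto_div_sqrt_sq_add_atTop (y₀ - h)).const_mul (M * h / 2) using 2
    ring
  have hle : ∀ᶠ v in atTop, v * |∫ u : ℝ, F (x₀ + v + u, y₀ + v ^ 2 - u ^ 2)| ≤
      M * h / 2 * (v / √(v ^ 2 + (y₀ - h))) := by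
    filter_upwards [eventually_ge_atTop r, eventually_gt_atTop 0,
      (tendsto_pow_atTop two_ne_zero).eventually_gt_atTop (h - y₀)] with v hrv hv hv2
    have hbound := abs_integral_parabola_le hsupp hh.le (fun p => le_ciSup hbdd p) hrv
      (by linarith)
    calc v * |∫ u : ℝ, F (x₀ + v + u, y₀ + v ^ 2 - u ^ 2)|
        ≤ v * (M * h / (2 * √(y₀ + v ^ 2 - h))) := by gcongr
      _ = M * h / 2 * (v / √(v ^ 2 + (y₀ - h))) := by ring_nf
  have hcobdd : IsCoboundedUnder (· ≤ ·) atTop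
      (fun v : ℝ => v * |∫ u : ℝ, F (x₀ + v + u, y₀ + v ^ 2 - u ^ 2)|) :=
    isCoboundedUnder_le_of_eventually_le atTop (x := 0)
      (by filter_upwards [eventually_ge_atTop 0] with v hv; positivity)
  exact (limsup_le_limsup hle hcobdd hlim.isBoundedUnder_le).trans_eq hlim.limsup_eq

theorem stmt3 (F : ℝ × ℝ → ℝ) (hF : Continuous F) (x₀ y₀ r h : ℝ)
    (hr : 0 < r) (hh : 0 < h) (hy₀ : 0 < y₀)
    (hsupp : Function.support F ⊆ Set.Icc (x₀ - r) (x₀ + r) ×ˢ Set.Icc 0 h) :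
    Filter.limsup (fun v : ℝ => v * |∫ u : ℝ, F (x₀ + v + u, y₀ + v ^ 2 - u ^ 2)|)
        Filter.atTop ≤ (1 / 2) * (⨆ p, |F p|) * h :=
  stmt3_general F hF x₀ y₀ r h hh hsupp
end

section
/- Let n ≥ 1, let F : ℝⁿ × ℝ → ℝ be continuous with compact support contained in B(x₀, r) × [0, h] for some r, h > 0 and x₀ ∈ ℝⁿ, and let y₀ > 0. Define G(v) = |∫_{ℝⁿ} F(x₀ + v + u, y₀ + |v|² − |u|²) du| for v ∈ ℝⁿ. Then limsup_{|v|→∞} |v| · G(v) ≤ (sup |F|)/2 · |B^{n−1}| · r^{n−1} · h, where |B^{n−1}| is the volume of the unit ball in ℝ^{n−1} (with |B⁰| = 1). -/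
open MeasureTheory Filter Metric Set Topology
open scoped RealInnerProductSpace

/-!
For `‖v‖ > r` the integrand vanishes unless `w = v + u` lies in the ball `‖w‖ < r` and the
height `y₀ + 2⟪w, v⟫ - ‖w‖²` lies in `[0, h]`. Along the direction of `v` this height increases
with slope at least `2(‖v‖ - r)` on the ball, so each line parallel to `v` meets that set in a
segment of length at most `h / (2(‖v‖ - r))`; by Fubini its volume is at most
`h / (2(‖v‖ - r)) · |B^{n-1}| r^{n-1}`. Multiplying by `‖v‖ sup |F|` and letting `‖v‖ → ∞` gives
the bound.
-/

theorem volume_setOf_abs_le_quadratic_mem_Icc_le {r V a h : ℝ} (hV : r < V) :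
    volume {t : ℝ | |t| ≤ r ∧ 2 * V * t - t ^ 2 ∈ Icc a (a + h)}
      ≤ ENNReal.ofReal (h / (2 * (V - r))) := by
  refine (Real.volume_le_diam _).trans (Metric.ediam_le fun s hs t ht => ?_)
  wlog hst : s ≤ t generalizing s t
  · rw [edist_comm]; exact this t ht s hs (le_of_not_ge hst)
  rw [edist_dist, Real.dist_eq, abs_sub_comm, abs_of_nonneg (sub_nonneg.2 hst)]
  refine ENNReal.ofReal_le_ofReal ((le_div_iff₀ (by linarith)).2 ?_)
  have hsum : t + s ≤ 2 * r := by linarith [(abs_le.1 hs.1).2, (abs_le.1 ht.1).2]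
  -- (2Vt - t²) - (2Vs - s²) = (t - s)(2V - t - s) ≥ 2(V - r)(t - s)
  nlinarith [hs.2.1, ht.2.2, mul_le_mul_of_nonneg_left
    (by linarith : 2 * (V - r) ≤ 2 * V - t - s) (sub_nonneg.2 hst)]

theorem measure_prod_le_mul_of_slice_le {α β : Type*} [MeasurableSpace α] [MeasurableSpace β]
    {μ : Measure α} {ν : Measure β} [SFinite μ] [SFinite ν] {S : Set (α × β)}
    (hS : MeasurableSet S) {T : Set β} (hST : ∀ p ∈ S, p.2 ∈ T) {a : ENNReal}
    (ha : ∀ y ∈ T, μ ((·, y) ⁻¹' S) ≤ a) : μ.prod ν S ≤ a * ν T := by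
  rw [Measure.prod_apply_symm hS]
  refine (lintegral_mono fun y => ?_).trans (lintegral_indicator_const_le T a)
  by_cases hy : y ∈ T
  · simpa [indicator_of_mem hy] using ha y hy
  · have : (·, y) ⁻¹' S = ∅ := eq_empty_of_forall_notMem fun t ht => hy (hST _ ht)
    simp [this]

section Paraboloid

variable {E : Type*} [NormedAddCommGroup E] [InnerProductSpace ℝ E] [FiniteDimensional ℝ E]
  [MeasurableSpace E] [BorelSpace E] {m : ℕ}

theorem exists_measurePreserving_inner_prod (hE : Module.finrank ℝ E = m + 1) {e : E}
    (he : ‖e‖ = 1) :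
    ∃ Φ : E → ℝ × EuclideanSpace ℝ (Fin m), MeasurePreserving Φ ∧
      ∀ w, (Φ w).1 = ⟪e, w⟫ ∧ ‖w‖ ^ 2 = (Φ w).1 ^ 2 + ‖(Φ w).2‖ ^ 2 := by
  have horth : Orthonormal ℝ (({0} : Set (Fin (m + 1))).domRestrict fun _ => e) :=
    ⟨fun _ => he, fun i j hij => absurd (Subtype.ext (i.2.trans j.2.symm)) hij⟩
  obtain ⟨b, hb⟩ := horth.exists_orthonormalBasis_extension_of_card_eq (by simp [hE])
  refine ⟨Prod.map id (MeasurableEquiv.toLp 2 (Fin m → ℝ)) ∘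
    MeasurableEquiv.piFinSuccAbove (fun _ => ℝ) 0 ∘ (MeasurableEquiv.toLp 2 _).symm ∘ b.repr,
    ?_, fun w => ⟨?_, ?_⟩⟩
  · exact ((MeasurePreserving.id volume).prod
      (EuclideanSpace.volume_preserving_symm_measurableEquiv_toLp (Fin m)).symm).comp
      ((volume_preserving_piFinSuccAbove _ 0).comp
        ((EuclideanSpace.volume_preserving_symm_measurableEquiv_toLp _).comp
          b.measurePreserving_repr))
  · simp [b.repr_apply_apply, hb 0 rfl]
  · rw [← b.repr.norm_map, EuclideanSpace.norm_sq_eq, EuclideanSpace.norm_sq_eq,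
      Fin.sum_univ_succAbove _ 0]
    simp [Fin.tail]

/-- With `w = v + u`, the height `y₀ + ‖v‖² - ‖u‖²` equals `y₀ + 2⟪w, v⟫ - ‖w‖²`, so `u ↦ v + u`
maps the set of `u` where `F (x₀ + v + u, y₀ + ‖v‖² - ‖u‖²)` can be nonzero into this set. -/
def paraboloidSlab (r h y₀ : ℝ) (v : E) : Set E :=
  {w | ‖w‖ < r ∧ y₀ + 2 * ⟪w, v⟫ - ‖w‖ ^ 2 ∈ Icc 0 h}

theorem volume_paraboloidSlab_le (hE : Module.finrank ℝ E = m + 1) {r h y₀ : ℝ} (hr : 0 ≤ r)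
    {v : E} (hv : r < ‖v‖) :
    volume (paraboloidSlab r h y₀ v)
      ≤ ENNReal.ofReal (h / (2 * (‖v‖ - r))) * volume (ball (0 : EuclideanSpace ℝ (Fin m)) r) := by
  have hv₀ : v ≠ 0 := norm_pos_iff.1 (hr.trans_lt hv)
  obtain ⟨Φ, hΦ, hΦw⟩ :=
    exists_measurePreserving_inner_prod hE (e := ‖v‖⁻¹ • v)
      (by rw [norm_smul, norm_inv, norm_norm, inv_mul_cancel₀ (norm_ne_zero_iff.2 hv₀)])
  set S : Set (ℝ × EuclideanSpace ℝ (Fin m)) := {p | p.1 ^ 2 + ‖p.2‖ ^ 2 < r ^ 2 ∧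
    y₀ + 2 * ‖v‖ * p.1 - (p.1 ^ 2 + ‖p.2‖ ^ 2) ∈ Icc 0 h}
  have hS : MeasurableSet S := by
    have hq : Measurable fun p : ℝ × EuclideanSpace ℝ (Fin m) => p.1 ^ 2 + ‖p.2‖ ^ 2 := by fun_prop
    exact (measurableSet_lt hq measurable_const).inter
      (measurableSet_Icc.preimage (by fun_prop))
  have hpre : paraboloidSlab r h y₀ v = Φ ⁻¹' S := by
    ext w
    obtain ⟨hfst, hnorm⟩ := hΦw w
    have hinner : ⟪w, v⟫ = ‖v‖ * (Φ w).1 := by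
      rw [hfst, real_inner_smul_left, real_inner_comm, ← mul_assoc,
        mul_inv_cancel₀ (norm_ne_zero_iff.2 hv₀), one_mul]
    simp only [paraboloidSlab, mem_ofPred_eq, mem_preimage, S, ← hnorm, hinner, ← mul_assoc,
      sq_lt_sq₀ (norm_nonneg w) hr]
  rw [hpre, hΦ.measure_preimage hS.nullMeasurableSet]
  refine measure_prod_le_mul_of_slice_le hS (fun p hp => ?_) fun y _ => ?_
  · rw [mem_ball_zero_iff, ← sq_lt_sq₀ (norm_nonneg _) hr]
    nlinarith [hp.1, sq_nonneg p.1]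
  · refine (measure_mono fun t ht => ?_).trans
      (volume_setOf_abs_le_quadratic_mem_Icc_le (a := ‖y‖ ^ 2 - y₀) hv)
    obtain ⟨hball, hlo, hhi⟩ := ht
    exact ⟨abs_le_of_sq_le_sq (by nlinarith [sq_nonneg ‖y‖]) hr, by linarith, by linarith⟩

theorem abs_integral_paraboloid_le (hE : Module.finrank ℝ E = m + 1) {F : E × ℝ → ℝ} {M : ℝ}
    (hM : ∀ p, |F p| ≤ M) {x₀ : E} {r h : ℝ} (hr : 0 ≤ r) (hh : 0 ≤ h)
    (hsupp : Function.support F ⊆ ball x₀ r ×ˢ Icc 0 h) (y₀ : ℝ) {v : E} (hv : r < ‖v‖) :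
    |∫ u, F (x₀ + v + u, y₀ + ‖v‖ ^ 2 - ‖u‖ ^ 2)|
      ≤ M * (h / (2 * (‖v‖ - r)) * volume.real (ball (0 : EuclideanSpace ℝ (Fin m)) r)) := by
  set A := paraboloidSlab r h y₀ v
  have hzero : ∀ u ∉ (v + ·) ⁻¹' A, F (x₀ + v + u, y₀ + ‖v‖ ^ 2 - ‖u‖ ^ 2) = 0 := by
    intro u hu
    by_contra hne
    obtain ⟨hx, hy⟩ := hsupp (Function.mem_support.2 hne)
    have hheight : y₀ + 2 * ⟪v + u, v⟫ - ‖v + u‖ ^ 2 = y₀ + ‖v‖ ^ 2 - ‖u‖ ^ 2 := by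
      have := norm_sub_sq_real (v + u) v
      rw [add_sub_cancel_left] at this
      linarith
    exact hu ⟨by simpa [add_assoc] using hx, hheight ▸ hy⟩
  have hvol : volume A ≤ ENNReal.ofReal (h / (2 * (‖v‖ - r))) *
      volume (ball (0 : EuclideanSpace ℝ (Fin m)) r) := volume_paraboloidSlab_le hE hr hv
  have hfin : ENNReal.ofReal (h / (2 * (‖v‖ - r))) *
      volume (ball (0 : EuclideanSpace ℝ (Fin m)) r) ≠ ⊤ :=
    ENNReal.mul_ne_top ENNReal.ofReal_ne_top measure_ball_lt_top.ne
  rw [← Real.norm_eq_abs, ← setIntegral_eq_integral_of_forall_compl_eq_zero hzero]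
  refine (norm_setIntegral_le_of_norm_le_const (C := M) ?_ fun p _ => hM _).trans ?_
  · rw [measure_preimage_add]; exact hvol.trans_lt hfin.lt_top
  · rw [measureReal_def, measure_preimage_add]
    gcongr
    · exact (abs_nonneg _).trans (hM 0)
    · calc (volume A).toReal ≤ _ := ENNReal.toReal_mono hfin hvol
        _ = _ := by
          rw [ENNReal.toReal_mul, ENNReal.toReal_ofReal (div_nonneg hh (by linarith)),
            measureReal_def]

end Paraboloid

theorem tendsto_div_two_mul_sub_atTop (r : ℝ) :
    Tendsto (fun x : ℝ => x / (2 * (x - r))) atTop (𝓝 (1 / 2)) := by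
  have hlim : Tendsto (fun x : ℝ => (2 * (1 - r * x⁻¹))⁻¹) atTop (𝓝 (2 * (1 - r * 0))⁻¹) :=
    ((tendsto_const_nhds.sub (tendsto_inv_atTop_zero.const_mul r)).const_mul 2).inv₀ (by simp)
  rw [show (2 * (1 - r * 0))⁻¹ = (1 / 2 : ℝ) by norm_num] at hlim
  refine hlim.congr' ?_
  filter_upwards [eventually_gt_atTop (max r 0)] with x hx
  have hx₀ : x ≠ 0 := (lt_of_le_of_lt (le_max_right r 0) hx).ne'
  have hxr : x - r ≠ 0 := sub_ne_zero.2 (lt_of_le_of_lt (le_max_left r 0) hx).ne'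
  field_simp

theorem stmt4_general (n : ℕ) (hn : 1 ≤ n) (F : EuclideanSpace ℝ (Fin n) × ℝ → ℝ)
    (hF : Continuous F) (hFc : HasCompactSupport F)
    (x₀ : EuclideanSpace ℝ (Fin n)) (r h y₀ : ℝ)
    (hr : 0 < r) (hh : 0 < h)
    (hsupp : Function.support F ⊆ Metric.ball x₀ r ×ˢ Set.Icc 0 h) :
    Filter.limsup (fun v : EuclideanSpace ℝ (Fin n) =>
        ‖v‖ * |∫ u : EuclideanSpace ℝ (Fin n),
          F (x₀ + v + u, y₀ + ‖v‖ ^ 2 - ‖u‖ ^ 2)|)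
      (Filter.comap norm Filter.atTop)
      ≤ (⨆ p, |F p|) / 2 *
          (volume (Metric.ball (0 : EuclideanSpace ℝ (Fin (n - 1))) 1)).toReal *
          r ^ (n - 1) * h := by
  obtain ⟨m, rfl⟩ : ∃ m, n = m + 1 := ⟨n - 1, by omega⟩
  have hM : ∀ p, |F p| ≤ ⨆ p, |F p| :=
    le_ciSup (hF.abs.bddAbove_range_of_hasCompactSupport hFc.abs)
  set C := (⨆ p, |F p|) * h * volume.real (ball (0 : EuclideanSpace ℝ (Fin m)) r)
  have hbound : ∀ᶠ v in comap norm atTop, ‖v‖ * |∫ u : EuclideanSpace ℝ (Fin (m + 1)),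
      F (x₀ + v + u, y₀ + ‖v‖ ^ 2 - ‖u‖ ^ 2)| ≤ C * (‖v‖ / (2 * (‖v‖ - r))) := by
    filter_upwards [tendsto_comap.eventually (eventually_gt_atTop r)] with v hv
    calc _ ≤ ‖v‖ * ((⨆ p, |F p|) * (h / (2 * (‖v‖ - r)) *
          volume.real (ball (0 : EuclideanSpace ℝ (Fin m)) r))) :=
          mul_le_mul_of_nonneg_left
            (abs_integral_paraboloid_le (by simp) hM hr.le hh.le hsupp y₀ hv) (norm_nonneg v)
      _ = _ := by ring
  have hlim : Tendsto (fun v : EuclideanSpace ℝ (Fin (m + 1)) => C * (‖v‖ / (2 * (‖v‖ - r))))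
      (comap norm atTop) (𝓝 (C * (1 / 2))) :=
    ((tendsto_div_two_mul_sub_atTop r).const_mul C).comp tendsto_comap
  have : NeBot (comap (norm : EuclideanSpace ℝ (Fin (m + 1)) → ℝ) atTop) := by
    rw [comap_norm_atTop]; infer_instance
  calc _ ≤ C * (1 / 2) := (limsup_le_limsup hbound (isCoboundedUnder_le_of_le _
          fun v => by positivity) hlim.isBoundedUnder_le).trans hlim.limsup_eq.le
    _ = _ := by
      simp only [C]
      rw [measureReal_def, Measure.addHaar_ball_of_pos _ _ hr, ENNReal.toReal_mul,
        ENNReal.toReal_ofReal (by positivity), finrank_euclideanSpace_fin, add_tsub_cancel_right]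
      ring

theorem stmt4 (n : ℕ) (hn : 1 ≤ n) (F : EuclideanSpace ℝ (Fin n) × ℝ → ℝ)
    (hF : Continuous F) (hFc : HasCompactSupport F)
    (x₀ : EuclideanSpace ℝ (Fin n)) (r h y₀ : ℝ)
    (hr : 0 < r) (hh : 0 < h) (hy₀ : 0 < y₀)
    (hsupp : Function.support F ⊆ Metric.ball x₀ r ×ˢ Set.Icc 0 h) :
    Filter.limsup (fun v : EuclideanSpace ℝ (Fin n) =>
        ‖v‖ * |∫ u : EuclideanSpace ℝ (Fin n),
          F (x₀ + v + u, y₀ + ‖v‖ ^ 2 - ‖u‖ ^ 2)|)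
      (Filter.comap norm Filter.atTop)
      ≤ (⨆ p, |F p|) / 2 *
          (volume (Metric.ball (0 : EuclideanSpace ℝ (Fin (n - 1))) 1)).toReal *
          r ^ (n - 1) * h :=
  stmt4_general n hn F hF hFc x₀ r h y₀ hr hh hsupp
end

section
/- Let n ≥ 1. For f : ℝⁿ × (0,∞) → ℝ in the Schwartz class, define the spherical mean data g(x,y) = (2/|Sⁿ|) y^{1−n} ∫_{|u|<y} f(x+u, √(y²−|u|²)) / √(y²−|u|²) du, and define F(x,y) = y^{−1/2} f(x, √y) for y > 0 (F = 0 for y ≤ 0), G(x,y) = (|Sⁿ|/2) y^{(n−1)/2} g(x, √y) for y > 0 (G = 0 for y ≤ 0). Then G(x,y) = ∫_{ℝⁿ} F(x + u, y − |u|²) du, i.e., the mappings N : f ↦ F and M : g ↦ G intertwine the spherical mean transform S with the paraboloid convolution P: M ∘ S = P ∘ N. -/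
open MeasureTheory

theorem stmt12 (n : ℕ) (hn : 1 ≤ n)
    (f : SchwartzMap (EuclideanSpace ℝ (Fin n) × ℝ) ℝ)
    (x : EuclideanSpace ℝ (Fin n)) (y : ℝ) :
    let Sn : ℝ := 2 * Real.pi ^ (((n : ℝ) + 1) / 2) / Real.Gamma (((n : ℝ) + 1) / 2)
    let g : EuclideanSpace ℝ (Fin n) → ℝ → ℝ := fun x y =>
      (2 / Sn) * y ^ ((1 : ℝ) - n) *
        ∫ u in Metric.ball (0 : EuclideanSpace ℝ (Fin n)) y,
          f (x + u, Real.sqrt (y ^ 2 - ‖u‖ ^ 2)) / Real.sqrt (y ^ 2 - ‖u‖ ^ 2)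
    let F : EuclideanSpace ℝ (Fin n) → ℝ → ℝ := fun x y =>
      if 0 < y then y ^ (-(1 : ℝ) / 2) * f (x, Real.sqrt y) else 0
    let G : EuclideanSpace ℝ (Fin n) → ℝ → ℝ := fun x y =>
      if 0 < y then (Sn / 2) * y ^ (((n : ℝ) - 1) / 2) * g x (Real.sqrt y) else 0
    G x y = ∫ u : EuclideanSpace ℝ (Fin n), F (x + u) (y - ‖u‖ ^ 2) := by
  intro Sn g F G
  have hSn : 0 < Sn := by
    have hg : 0 < Real.Gamma (((n : ℝ) + 1) / 2) :=
      Real.Gamma_pos_of_pos (by positivity)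
    have hp : 0 < Real.pi ^ (((n : ℝ) + 1) / 2) :=
      Real.rpow_pos_of_pos Real.pi_pos _
    exact div_pos (by linarith) hg
  have hF : F = fun x y =>
      if 0 < y then y ^ (-(1 : ℝ) / 2) * f (x, Real.sqrt y) else 0 := rfl
  have hG : G = fun x y =>
      if 0 < y then (Sn / 2) * y ^ (((n : ℝ) - 1) / 2) * g x (Real.sqrt y) else 0 := rfl
  have hg : g = fun x y =>
      (2 / Sn) * y ^ ((1 : ℝ) - n) *
        ∫ u in Metric.ball (0 : EuclideanSpace ℝ (Fin n)) y,
          f (x + u, Real.sqrt (y ^ 2 - ‖u‖ ^ 2)) / Real.sqrt (y ^ 2 - ‖u‖ ^ 2) := rfl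
  by_cases hy : 0 < y
  · have hys : Real.sqrt y ^ 2 = y := Real.sq_sqrt hy.le
    have key : ∀ u : EuclideanSpace ℝ (Fin n),
        F (x + u) (y - ‖u‖ ^ 2) =
          Set.indicator (Metric.ball (0 : EuclideanSpace ℝ (Fin n)) (Real.sqrt y))
            (fun u => f (x + u, Real.sqrt (y - ‖u‖ ^ 2)) / Real.sqrt (y - ‖u‖ ^ 2)) u := by
      intro u
      by_cases hu : ‖u‖ < Real.sqrt y
      · have hmem : u ∈ Metric.ball (0 : EuclideanSpace ℝ (Fin n)) (Real.sqrt y) := by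
          simpa [Metric.mem_ball, dist_zero_right] using hu
        have ht : 0 < y - ‖u‖ ^ 2 := by
          nlinarith [norm_nonneg u, Real.sqrt_nonneg y, hys]
        rw [Set.indicator_of_mem hmem, hF]
        simp only [if_pos ht]
        have hr : (y - ‖u‖ ^ 2) ^ (-(1 : ℝ) / 2) = (Real.sqrt (y - ‖u‖ ^ 2))⁻¹ := by
          rw [show (-(1 : ℝ) / 2) = -(1 / 2) by ring, Real.rpow_neg ht.le,
            ← Real.sqrt_eq_rpow]
        rw [hr, div_eq_inv_mul]
      · have hnot : ¬ 0 < y - ‖u‖ ^ 2 := by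
          push_neg at hu ⊢
          nlinarith [norm_nonneg u, Real.sqrt_nonneg y, hys]
        have hmem : u ∉ Metric.ball (0 : EuclideanSpace ℝ (Fin n)) (Real.sqrt y) := by
          simpa [Metric.mem_ball, dist_zero_right] using hu
        rw [Set.indicator_of_notMem hmem, hF]
        simp only [if_neg hnot]
    rw [hG]
    simp only [if_pos hy]
    rw [hg]
    simp only [hys]
    have hrhs : (∫ u : EuclideanSpace ℝ (Fin n), F (x + u) (y - ‖u‖ ^ 2)) =
        ∫ u in Metric.ball (0 : EuclideanSpace ℝ (Fin n)) (Real.sqrt y),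
          f (x + u, Real.sqrt (y - ‖u‖ ^ 2)) / Real.sqrt (y - ‖u‖ ^ 2) := by
      simp only [key]
      exact integral_indicator Metric.isOpen_ball.measurableSet
    rw [hrhs]
    have h1 : (Real.sqrt y) ^ ((1 : ℝ) - n) = y ^ (((1 : ℝ) - n) / 2) := by
      rw [Real.sqrt_eq_rpow, ← Real.rpow_mul hy.le]
      ring_nf
    have h2 : y ^ (((n : ℝ) - 1) / 2) * y ^ (((1 : ℝ) - n) / 2) = 1 := by
      rw [← Real.rpow_add hy, show ((n : ℝ) - 1) / 2 + ((1 : ℝ) - n) / 2 = 0 by ring,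
        Real.rpow_zero]
    rw [h1]
    set I := ∫ u in Metric.ball (0 : EuclideanSpace ℝ (Fin n)) (Real.sqrt y),
          f (x + u, Real.sqrt (y - ‖u‖ ^ 2)) / Real.sqrt (y - ‖u‖ ^ 2)
    have : Sn / 2 * y ^ (((n : ℝ) - 1) / 2) * (2 / Sn * y ^ (((1 : ℝ) - n) / 2) * I)
        = (Sn / 2 * (2 / Sn)) * (y ^ (((n : ℝ) - 1) / 2) * y ^ (((1 : ℝ) - n) / 2)) * I := by
      ring
    rw [this, h2]
    field_simp
  · have key0 : ∀ u : EuclideanSpace ℝ (Fin n), F (x + u) (y - ‖u‖ ^ 2) = 0 := by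
      intro u
      rw [hF]
      have : ¬ 0 < y - ‖u‖ ^ 2 := by
        push_neg at hy ⊢
        nlinarith [norm_nonneg u]
      simp only [if_neg this]
    rw [hG]
    simp only [if_neg hy, key0, integral_zero]
end

section
/- Let n ≥ 1 and let R denote the Radon transform on ℝ^{n+1} ≅ ℝⁿ × ℝ: R(φ)((ω,θ), p) = ∫_{(ω,θ)·(x,y)=p} φ dm for (ω,θ) ∈ Sⁿ, p ∈ ℝ. For F ∈ 𝒮(ℝⁿ × ℝ) and G(x,y) = ∫_{ℝⁿ} F(x+u, y−|u|²) du, the relation R(G)((ω,θ), p) = ∫_{ℝⁿ} R(F)((ω,θ), p + (ω,θ)·(u, −|u|²)) du holds; that is, R ∘ P = Q_p ∘ R where Q_p(ψ)((ω,θ),p) = ∫_{ℝⁿ} ψ((ω,θ), p + ω·u − θ|u|²) du. -/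
/-!
Parametrize the hyperplane `⟪ν, w⟫ = s` isometrically by `x ↦ s • ν + T x`, with `T` a linear
isometry from `ℝⁿ` onto `ν^⊥`. Since `μH[n]` on `ℝⁿ` is a Haar measure, it is a constant multiple
of Lebesgue measure, so `R φ s = c * ∫ φ (s • ν + T x) dx`. By the translation rule
`R (φ (· + a)) s = R φ (s + ⟪ν, a⟫)` with `a = (u, -|u|²)`, the identity is Fubini in `(u, x)`.

Fubini applies as soon as `u ↦ (1 + |p + ⟪ω, u⟫ - θ‖u‖²|)⁻ᵏ` is integrable for large `k`, which
holds if `θ ≠ 0` (quadratic growth) or `n = 1`. In the remaining case `θ = 0`, `n ≥ 2`, both sides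
are integrals over `ℝⁿ` of functions with the same integral along every line of a fixed direction.
Such an integral is `0` in Lean: either the function is not integrable, or Fubini turns it into
the integral of a constant over the transverse directions, whose measure is infinite.
-/

open MeasureTheory Module Function Filter
open scoped RealInnerProductSpace

noncomputable section

namespace ParabolicRadon

section Radon

variable {V : Type*} [NormedAddCommGroup V] [InnerProductSpace ℝ V]

section Orthogonal

variable {ν : V}

theorem inner_smul_add_orthogonal (hν : ‖ν‖ = 1) (s : ℝ) (k : (ℝ ∙ ν)ᗮ) :
    ⟪ν, s • ν + k⟫ = s := by
  rw [inner_add_right, real_inner_smul_right, real_inner_self_eq_norm_sq, hν,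
    Submodule.mem_orthogonal_singleton_iff_inner_right.mp k.2]
  ring

theorem norm_smul_add_orthogonal_sq (hν : ‖ν‖ = 1) (s : ℝ) (k : (ℝ ∙ ν)ᗮ) :
    ‖s • ν + k‖ ^ 2 = s ^ 2 + ‖k‖ ^ 2 := by
  have hk : ⟪s • ν, (k : V)⟫ = 0 := by
    rw [real_inner_smul_left, Submodule.mem_orthogonal_singleton_iff_inner_right.mp k.2, mul_zero]
  rw [sq, sq, sq, norm_add_sq_eq_norm_sq_add_norm_sq_real hk, norm_smul, hν, Real.norm_eq_abs,
    Submodule.coe_norm]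
  nlinarith [sq_abs s]

theorem exists_eq_inner_smul_add_orthogonal (hν : ‖ν‖ = 1) (a : V) :
    ∃ k : (ℝ ∙ ν)ᗮ, a = ⟪ν, a⟫ • ν + k := by
  refine ⟨⟨a - ⟪ν, a⟫ • ν, Submodule.mem_orthogonal_singleton_iff_inner_right.mpr ?_⟩, ?_⟩
  · rw [inner_sub_right, real_inner_smul_right, real_inner_self_eq_norm_sq, hν]; ring
  · simp

end Orthogonal

variable [MeasurableSpace V] [BorelSpace V]

def radon (d : ℝ) (ν : V) (φ : V → ℝ) (s : ℝ) : ℝ :=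
  ∫ w in {w : V | ⟪ν, w⟫ = s}, φ w ∂μH[d]

theorem radon_comp_add (d : ℝ) (ν a : V) (φ : V → ℝ) (s : ℝ) :
    radon d ν (fun w => φ (w + a)) s = radon d ν φ (s + ⟪ν, a⟫) := by
  let e := IsometryEquiv.addRight a
  have hpre : e ⁻¹' {w | ⟪ν, w⟫ = s + ⟪ν, a⟫} = {w | ⟪ν, w⟫ = s} := by
    ext w; simp [e, inner_add_right]
  rw [radon, radon, ← hpre]
  exact (e.measurePreserving_hausdorffMeasure d).setIntegral_preimage_emb
    e.toHomeomorph.measurableEmbedding φ _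

variable {ν : V}

theorem radon_eq_integral_orthogonal {W : Type*} [NormedAddCommGroup W] [InnerProductSpace ℝ W]
    [CompleteSpace W] [MeasurableSpace W] [BorelSpace W] (hν : ‖ν‖ = 1)
    (T : W ≃ₗᵢ[ℝ] (ℝ ∙ ν)ᗮ) {d : ℝ} (hd : 0 ≤ d) (φ : V → ℝ) (s : ℝ) :
    radon d ν φ s = ∫ x, φ (s • ν + T x) ∂μH[d] := by
  let e : W → V := fun x => s • ν + T x
  have he : Isometry e := by
    refine Isometry.of_dist_eq fun x y => ?_
    simp only [e, dist_eq_norm, add_sub_add_left_eq_sub, ← Submodule.coe_sub, ← map_sub]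
    exact T.norm_map (x - y)
  have hrange : Set.range e = {w | ⟪ν, w⟫ = s} := by
    ext w
    constructor
    · rintro ⟨x, rfl⟩
      exact inner_smul_add_orthogonal hν s (T x)
    · intro hw
      obtain ⟨k, hk⟩ := exists_eq_inner_smul_add_orthogonal hν w
      refine ⟨T.symm k, ?_⟩
      simp only [e, LinearIsometryEquiv.apply_symm_apply]
      rw [hk, show ⟪ν, w⟫ = s from hw]
  rw [radon, ← hrange, ← he.map_hausdorffMeasure (Or.inl hd),
    he.isClosedEmbedding.measurableEmbedding.integral_map]

theorem exists_radon_eq_mul_integral [FiniteDimensional ℝ V] {n : ℕ}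
    (hdim : finrank ℝ V = n + 1) (hν : ‖ν‖ = 1) :
    ∃ (c : ℝ) (T : EuclideanSpace ℝ (Fin n) ≃ₗᵢ[ℝ] (ℝ ∙ ν)ᗮ),
      ∀ φ s, radon n ν φ s = c * ∫ x, φ (s • ν + T x) := by
  have : Fact (finrank ℝ V = n + 1) := ⟨hdim⟩
  have hK : finrank ℝ (ℝ ∙ ν)ᗮ = n :=
    Submodule.finrank_orthogonal_span_singleton (by rintro rfl; simp at hν)
  let T := ((stdOrthonormalBasis ℝ (ℝ ∙ ν)ᗮ).reindex (finCongr hK)).repr.symm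
  have hμ := Measure.isAddLeftInvariant_eq_smul
    (μH[n] : Measure (EuclideanSpace ℝ (Fin n))) volume
  refine ⟨(μH[(n : ℝ)] : Measure (EuclideanSpace ℝ (Fin n))).addHaarScalarFactor volume, T,
    fun φ s => ?_⟩
  rw [radon_eq_integral_orthogonal hν T n.cast_nonneg,
    congrArg (fun μ => ∫ x, φ (s • ν + T x) ∂μ) hμ, integral_smul_nnreal_measure,
    NNReal.smul_def, smul_eq_mul]

end Radon

section Degenerate

variable {V : Type*} [NormedAddCommGroup V] [InnerProductSpace ℝ V] [FiniteDimensional ℝ V]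

theorem exists_orthonormalBasis_apply_eq {ι : Type*} [Fintype ι]
    (h : finrank ℝ V = Fintype.card ι) {w : V} (hw : ‖w‖ = 1) (i : ι) :
    ∃ b : OrthonormalBasis ι ℝ V, b i = w := by
  have hv : Orthonormal ℝ (({i} : Set ι).domRestrict fun _ => w) :=
    ⟨fun _ => hw, fun j k hjk => (hjk (Subsingleton.elim j k)).elim⟩
  obtain ⟨b, hb⟩ := Orthonormal.exists_orthonormalBasis_extension_of_card_eq h hv
  exact ⟨b, hb i rfl⟩

variable [MeasurableSpace V] [BorelSpace V]

theorem integral_eq_zero_of_integral_add_smul_eq (h2 : 2 ≤ finrank ℝ V) {w : V} (hw : ‖w‖ = 1)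
    (g : V → ℝ) (c : ℝ) (hg : ∀ v, ∫ t : ℝ, g (v + t • w) = c) : ∫ v, g v = 0 := by
  obtain ⟨m, hm⟩ : ∃ m, finrank ℝ V = m + 2 := ⟨_, (Nat.sub_add_cancel h2).symm⟩
  obtain ⟨b, rfl⟩ := exists_orthonormalBasis_apply_eq (by simpa using hm) hw (0 : Fin (m + 2))
  let Φ : ℝ × (Fin (m + 1) → ℝ) ≃ᵐ V :=
    ((MeasurableEquiv.piFinSuccAbove (fun _ => ℝ) 0).symm.trans
      (MeasurableEquiv.toLp 2 _)).trans b.repr.symm.toMeasurableEquiv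
  have hΦ : MeasurePreserving Φ volume volume :=
    b.measurePreserving_repr_symm.comp <|
      ((EuclideanSpace.volume_preserving_symm_measurableEquiv_toLp _).symm _).comp
        ((volume_preserving_piFinSuccAbove (fun _ => ℝ) 0).symm _)
  have hline : ∀ t y, Φ (t, y) = Φ (0, y) + t • b 0 := by
    intro t y
    have : (Fin.insertNth 0 t y : Fin (m + 2) → ℝ) =
        Fin.insertNth 0 0 y + t • Pi.single (0 : Fin (m + 2)) 1 := by
      ext j; refine Fin.cases ?_ (fun i => ?_) j <;> simp
    change b.repr.symm (WithLp.toLp 2 (Fin.insertNth 0 t y)) =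
      b.repr.symm (WithLp.toLp 2 (Fin.insertNth 0 0 y)) + t • b 0
    rw [this, WithLp.toLp_add, WithLp.toLp_smul, map_add, map_smul]
    congr 2
    exact b.repr_symm_single 0
  rw [← hΦ.integral_comp Φ.measurableEmbedding]
  by_cases hint : Integrable (fun z => g (Φ z)) (volume.prod volume)
  · rw [Measure.volume_eq_prod, integral_prod_symm _ hint]
    have hy : ∀ y, ∫ t, g (Φ (t, y)) = c := fun y => by
      simpa only [← hline] using hg (Φ (0, y))
    simp [hy, measureReal_def]
  · rw [Measure.volume_eq_prod]
    exact integral_undef hint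

theorem integral_comp_inner_eq_zero (h2 : 2 ≤ finrank ℝ V) {ω : V} (hω : ‖ω‖ = 1)
    (ρ : ℝ → ℝ) : ∫ u, ρ ⟪ω, u⟫ = 0 := by
  obtain ⟨m, hm⟩ : ∃ m, finrank ℝ V = m + 2 := ⟨_, (Nat.sub_add_cancel h2).symm⟩
  obtain ⟨b, rfl⟩ := exists_orthonormalBasis_apply_eq (by simpa using hm) hω (0 : Fin (m + 2))
  refine integral_eq_zero_of_integral_add_smul_eq h2 (b.orthonormal.1 1) _ 0 fun v => ?_
  have h01 : ⟪b 0, b 1⟫ = 0 := b.orthonormal.2 (by simp)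
  simp [inner_add_right, real_inner_smul_right, h01, measureReal_def]

end Degenerate

section Integrability

theorem integrable_prod_of_norm_le_mul_comp_add {α β : Type*} [MeasurableSpace α]
    [MeasurableSpace β] [AddGroup β] [MeasurableAdd β] {μ : Measure α} {ν : Measure β}
    [SFinite μ] [SFinite ν] [ν.IsAddRightInvariant] {f : α × β → ℝ}
    (hf : AEStronglyMeasurable f (μ.prod ν)) {g : α → ℝ} (hg : Integrable g μ) {h : β → ℝ}
    (hh : Integrable h ν) (s : α → β) (hfgh : ∀ a b, ‖f (a, b)‖ ≤ g a * h (b + s a)) :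
    Integrable f (μ.prod ν) := by
  have hsec : ∀ a, Integrable (fun b => g a * h (b + s a)) ν :=
    fun a => (hh.comp_add_right (s a)).const_mul (g a)
  rw [integrable_prod_iff hf]
  refine ⟨?_, (hg.mul_const (∫ b, h b ∂ν)).mono' hf.norm.integral_prod_right'
    (Eventually.of_forall fun a => ?_)⟩
  · filter_upwards [hf.prodMk_left] with a ha
    exact (hsec a).mono' ha (Eventually.of_forall (hfgh a))
  · calc ‖∫ b, ‖f (a, b)‖ ∂ν‖ = ∫ b, ‖f (a, b)‖ ∂ν :=
          Real.norm_of_nonneg (integral_nonneg fun _ => norm_nonneg _)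
      _ ≤ ∫ b, g a * h (b + s a) ∂ν :=
          integral_mono_of_nonneg (Eventually.of_forall fun _ => norm_nonneg _) (hsec a)
            (Eventually.of_forall (hfgh a))
      _ = g a * ∫ b, h b ∂ν := by rw [integral_const_mul, integral_add_right_eq_self]

theorem _root_.SchwartzMap.exists_norm_le_mul_inv_mul_inv {E F : Type*} [NormedAddCommGroup E]
    [NormedSpace ℝ E] [NormedAddCommGroup F] [NormedSpace ℝ F] (f : SchwartzMap E F) (k : ℕ) :
    ∃ C, ∀ x (a b : ℝ), 0 ≤ a → 0 ≤ b → a ^ 2 + b ^ 2 ≤ ‖x‖ ^ 2 →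
      ‖f x‖ ≤ C * ((1 + a) ^ k)⁻¹ * ((1 + b) ^ k)⁻¹ := by
  refine ⟨2 ^ (2 * k) * (Finset.Iic (2 * k, 0)).sup (fun m => SchwartzMap.seminorm ℝ m.1 m.2) f,
    fun x a b ha hb hab => ?_⟩
  have hdecay := SchwartzMap.one_add_le_sup_seminorm_apply (𝕜 := ℝ) (m := (2 * k, 0)) le_rfl
    le_rfl f x
  rw [norm_iteratedFDeriv_zero] at hdecay
  have hsplit : ((1 + a) * (1 + b)) ^ k ≤ (1 + ‖x‖) ^ (2 * k) := by
    rw [pow_mul]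
    refine pow_le_pow_left₀ (by positivity) ?_ k
    have hax : a ≤ ‖x‖ := (pow_le_pow_iff_left₀ ha (norm_nonneg x) two_ne_zero).mp (by nlinarith)
    have hbx : b ≤ ‖x‖ := (pow_le_pow_iff_left₀ hb (norm_nonneg x) two_ne_zero).mp (by nlinarith)
    nlinarith
  rw [mul_assoc, ← mul_inv, ← mul_pow, ← div_eq_mul_inv, le_div_iff₀ (by positivity)]
  calc ‖f x‖ * ((1 + a) * (1 + b)) ^ k ≤ ‖f x‖ * (1 + ‖x‖) ^ (2 * k) := by gcongr
    _ ≤ _ := by rw [mul_comm]; exact hdecay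

theorem one_add_abs_le_mul_one_add_abs_add (p a : ℝ) : 1 + |a| ≤ (1 + |p|) * (1 + |p + a|) := by
  have h : |a| ≤ |p + a| + |p| := by simpa using abs_sub (p + a) p
  nlinarith [abs_nonneg p, abs_nonneg (p + a), mul_nonneg (abs_nonneg p) (abs_nonneg (p + a))]

section HaarDecay

variable {E : Type*} [NormedAddCommGroup E] [NormedSpace ℝ E] [FiniteDimensional ℝ E]
  [MeasurableSpace E] [BorelSpace E] (μ : Measure E) [μ.IsAddHaarMeasure]

theorem integrable_inv_one_add_norm_pow {k : ℕ} (hk : finrank ℝ E < k) :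
    Integrable (fun x : E => ((1 + ‖x‖) ^ k)⁻¹) μ := by
  refine (integrable_one_add_norm (μ := μ) (r := k) (by exact_mod_cast hk)).congr
    (Eventually.of_forall fun x => ?_)
  simp [Real.rpow_neg (by positivity : (0 : ℝ) ≤ 1 + ‖x‖)]

theorem integrable_inv_pow_of_le {f : E → ℝ} (hf : Measurable f) {κ : ℝ} (hκ : 0 < κ) {j k : ℕ}
    (hle : ∀ x, κ * (1 + ‖x‖) ^ j ≤ f x) (hk : finrank ℝ E < j * k) :
    Integrable (fun x => (f x ^ k)⁻¹) μ := by
  refine ((integrable_inv_one_add_norm_pow μ hk).const_mul (κ ^ k)⁻¹).mono'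
    (hf.pow_const k).inv.aestronglyMeasurable (Eventually.of_forall fun x => ?_)
  have hpos : 0 < κ * (1 + ‖x‖) ^ j := by positivity
  rw [Real.norm_of_nonneg (inv_nonneg.mpr (pow_nonneg (hpos.trans_le (hle x)).le k)), pow_mul,
    ← mul_inv, ← mul_pow]
  exact inv_anti₀ (by positivity) (pow_le_pow_left₀ hpos.le (hle x) k)

end HaarDecay

section Quadratic

variable {V : Type*} [NormedAddCommGroup V] [InnerProductSpace ℝ V]

theorem exists_mul_one_add_norm_sq_le {θ : ℝ} (hθ : θ ≠ 0) (ω : V) (p : ℝ) :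
    ∃ κ > 0, ∀ u : V, κ * (1 + ‖u‖) ^ 2 ≤ 1 + |p + (⟪ω, u⟫ - θ * ‖u‖ ^ 2)| := by
  have hθ' : 0 < |θ| := abs_pos.mpr hθ
  set B := ‖ω‖ ^ 2 / |θ|
  have hB : 0 ≤ B := by positivity
  refine ⟨min 1 |θ| / (4 * ((1 + B) * (1 + |p|))), by positivity, fun u => ?_⟩
  set a := ⟪ω, u⟫ - θ * ‖u‖ ^ 2
  have hinner : |θ| * ‖u‖ ^ 2 ≤ |a| + ‖ω‖ * ‖u‖ := by
    have h := abs_sub ⟪ω, u⟫ a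
    rw [show ⟪ω, u⟫ - a = θ * ‖u‖ ^ 2 by simp only [a]; ring, abs_mul,
      abs_of_nonneg (sq_nonneg ‖u‖)] at h
    linarith [abs_real_inner_le_norm ω u]
  have hamgm : 2 * (‖ω‖ * ‖u‖) ≤ |θ| * ‖u‖ ^ 2 + B := by
    have : 2 * (‖ω‖ * ‖u‖) * |θ| ≤ (|θ| * ‖u‖ ^ 2 + B) * |θ| := by
      simp only [B, add_mul, div_mul_cancel₀ _ hθ'.ne']
      nlinarith [sq_nonneg (|θ| * ‖u‖ - ‖ω‖)]
    exact le_of_mul_le_mul_right this hθ'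
  have hmin : min 1 |θ| * (1 + ‖u‖) ^ 2 ≤ 2 * (1 + |θ| * ‖u‖ ^ 2) := by
    have h1 := min_le_left 1 |θ|
    have h2 := min_le_right 1 |θ|
    have h0 : 0 ≤ min 1 |θ| := le_min zero_le_one hθ'.le
    nlinarith [sq_nonneg (1 - ‖u‖), sq_nonneg ‖u‖]
  have hp := one_add_abs_le_mul_one_add_abs_add p a
  rw [div_mul_eq_mul_div, div_le_iff₀ (by positivity)]
  nlinarith [abs_nonneg a, abs_nonneg p, mul_nonneg hB (abs_nonneg a)]

theorem one_add_norm_le_mul_one_add_abs_inner (h1 : finrank ℝ V = 1) {ω : V} (hω : ‖ω‖ = 1)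
    (p : ℝ) (u : V) : 1 + ‖u‖ ≤ (1 + |p|) * (1 + |p + ⟪ω, u⟫|) := by
  obtain ⟨c, rfl⟩ := exists_smul_eq_of_finrank_eq_one h1 (x := ω) (by rintro rfl; simp at hω) u
  simpa [norm_smul, hω, real_inner_smul_right, real_inner_self_eq_norm_sq] using
    one_add_abs_le_mul_one_add_abs_add p c

variable [FiniteDimensional ℝ V] [MeasurableSpace V] [BorelSpace V] (μ : Measure V)
  [μ.IsAddHaarMeasure]

theorem integrable_inv_one_add_abs_pow {ω : V} {θ : ℝ} (hsph : ‖ω‖ ^ 2 + θ ^ 2 = 1)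
    (hdeg : ¬(θ = 0 ∧ 2 ≤ finrank ℝ V)) {k : ℕ} (hk : finrank ℝ V < k) (p : ℝ) :
    Integrable (fun u => ((1 + |p + (⟪ω, u⟫ - θ * ‖u‖ ^ 2)|) ^ k)⁻¹) μ := by
  have hmeas : Measurable fun u : V => 1 + |p + (⟪ω, u⟫ - θ * ‖u‖ ^ 2)| :=
    (by fun_prop : Continuous _).measurable
  by_cases hθ : θ = 0
  · subst hθ
    have hω : ‖ω‖ = 1 :=
      (pow_eq_one_iff_of_nonneg (norm_nonneg ω) two_ne_zero).mp (by simpa using hsph)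
    have h1 : finrank ℝ V = 1 := by
      have : ¬2 ≤ finrank ℝ V := fun h => hdeg ⟨rfl, h⟩
      refine le_antisymm (by omega) (Nat.one_le_iff_ne_zero.mpr fun h0 => ?_)
      have := finrank_zero_iff.mp h0
      simp [Subsingleton.elim ω 0] at hω
    refine integrable_inv_pow_of_le μ hmeas (inv_pos.mpr (by positivity : (0 : ℝ) < 1 + |p|))
      (j := 1) (fun u => ?_) (by omega)
    rw [pow_one, inv_mul_le_iff₀ (by positivity)]
    simpa using one_add_norm_le_mul_one_add_abs_inner h1 hω p u
  · obtain ⟨κ, hκ, hle⟩ := exists_mul_one_add_norm_sq_le hθ ω p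
    exact integrable_inv_pow_of_le μ hmeas hκ hle (by omega)

end Quadratic

end Integrability

section Paraboloid

variable {n : ℕ}

/-- The point `(x, y)` of `ℝⁿ × ℝ`; this is `emb x y` in the statement. -/
def pointXY (x : EuclideanSpace ℝ (Fin n)) (y : ℝ) : EuclideanSpace ℝ (Fin n ⊕ Unit) :=
  (EuclideanSpace.equiv (Fin n ⊕ Unit) ℝ).symm (Sum.elim (fun j => x j) (fun _ => y))

theorem pointXY_surjective (w : EuclideanSpace ℝ (Fin n ⊕ Unit)) :
    ∃ x y, w = pointXY x y :=
  ⟨WithLp.toLp 2 fun i => w (Sum.inl i), w (Sum.inr ()), by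
    ext (i | i) <;> rfl⟩

theorem pointXY_add (x x' : EuclideanSpace ℝ (Fin n)) (y y' : ℝ) :
    pointXY x y + pointXY x' y' = pointXY (x + x') (y + y') := by
  ext (i | i) <;> simp [pointXY]

theorem pointXY_smul (t : ℝ) (x : EuclideanSpace ℝ (Fin n)) (y : ℝ) :
    t • pointXY x y = pointXY (t • x) (t * y) := by
  ext (i | i) <;> simp [pointXY]

theorem inner_pointXY (a x : EuclideanSpace ℝ (Fin n)) (b y : ℝ) :
    ⟪pointXY a b, pointXY x y⟫ = ⟪a, x⟫ + b * y := by
  simp [pointXY, PiLp.inner_apply, Fintype.sum_sum_type, mul_comm]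

theorem norm_pointXY_sq (x : EuclideanSpace ℝ (Fin n)) (y : ℝ) :
    ‖pointXY x y‖ ^ 2 = ‖x‖ ^ 2 + y ^ 2 := by
  rw [← real_inner_self_eq_norm_sq, inner_pointXY, real_inner_self_eq_norm_sq, sq y]

theorem norm_pointXY_eq_one {ω : EuclideanSpace ℝ (Fin n)} {θ : ℝ} (hsph : ‖ω‖ ^ 2 + θ ^ 2 = 1) :
    ‖pointXY ω θ‖ = 1 :=
  (pow_eq_one_iff_of_nonneg (norm_nonneg _) two_ne_zero).mp (by rw [norm_pointXY_sq, hsph])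

@[fun_prop]
theorem continuous_pointXY : Continuous fun q : EuclideanSpace ℝ (Fin n) × ℝ => pointXY q.1 q.2 :=
  (EuclideanSpace.equiv (Fin n ⊕ Unit) ℝ).symm.continuous.comp <|
    continuous_pi fun i => by cases i <;> simp only [Sum.elim_inl, Sum.elim_inr] <;> fun_prop

def parabolicShift (u : EuclideanSpace ℝ (Fin n)) : EuclideanSpace ℝ (Fin n ⊕ Unit) :=
  pointXY u (-‖u‖ ^ 2)

/-- The operator `P f (x, y) = ∫ f (x + u, y - |u|²) du`. -/
def parabolicMean (f : EuclideanSpace ℝ (Fin n ⊕ Unit) → ℝ) (w : EuclideanSpace ℝ (Fin n ⊕ Unit)) :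
    ℝ :=
  ∫ u, f (w + parabolicShift u)

theorem inner_parabolicShift (ω u : EuclideanSpace ℝ (Fin n)) (θ : ℝ) :
    ⟪pointXY ω θ, parabolicShift u⟫ = ⟪ω, u⟫ - θ * ‖u‖ ^ 2 := by
  rw [parabolicShift, inner_pointXY]; ring

@[fun_prop]
theorem continuous_parabolicShift : Continuous (parabolicShift (n := n)) :=
  continuous_pointXY.comp (continuous_id.prodMk (by fun_prop))

theorem integral_parabolicMean_add_smul (F : SchwartzMap (EuclideanSpace ℝ (Fin n ⊕ Unit)) ℝ)
    (w : EuclideanSpace ℝ (Fin n ⊕ Unit)) :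
    ∫ t : ℝ, parabolicMean F (w + t • pointXY 0 1) = ∫ x, ∫ s, F (pointXY x s) := by
  obtain ⟨x₀, y₀, rfl⟩ := pointXY_surjective w
  have hpt : ∀ t u, pointXY x₀ y₀ + t • pointXY 0 1 + parabolicShift u =
      pointXY (x₀ + u) (t + (y₀ - ‖u‖ ^ 2)) := fun t u => by
    rw [parabolicShift, pointXY_smul, pointXY_add, pointXY_add]; congr 1 <;> simp; ring
  obtain ⟨C, hF⟩ := F.exists_norm_le_mul_inv_mul_inv (n + 2)
  have hint : Integrable (fun z : EuclideanSpace ℝ (Fin n) × ℝ =>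
      F (pointXY (x₀ + z.1) (z.2 + (y₀ - ‖z.1‖ ^ 2)))) (volume.prod volume) := by
    refine integrable_prod_of_norm_le_mul_comp_add (by fun_prop : Continuous _).aestronglyMeasurable
      (((integrable_inv_one_add_norm_pow volume (k := n + 2) (by simp)).comp_add_left x₀).const_mul
        C)
      (integrable_inv_one_add_norm_pow volume (E := ℝ) (k := n + 2) (by simp))
      (fun u => y₀ - ‖u‖ ^ 2) fun u t => ?_
    refine (hF _ ‖x₀ + u‖ ‖t + (y₀ - ‖u‖ ^ 2)‖ (norm_nonneg _) (norm_nonneg _) ?_).trans_eq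
      (by ring)
    rw [norm_pointXY_sq, Real.norm_eq_abs, sq_abs]
  calc ∫ t : ℝ, parabolicMean F (pointXY x₀ y₀ + t • pointXY 0 1)
      = ∫ t : ℝ, ∫ u, F (pointXY (x₀ + u) (t + (y₀ - ‖u‖ ^ 2))) := by
        simp only [parabolicMean, hpt]
    _ = ∫ u, ∫ t : ℝ, F (pointXY (x₀ + u) (t + (y₀ - ‖u‖ ^ 2))) :=
        (integral_integral_swap hint).symm
    _ = ∫ u, ∫ s, F (pointXY (x₀ + u) s) := by
        congr 1 with u
        exact integral_add_right_eq_self (fun s => F (pointXY (x₀ + u) s)) _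
    _ = ∫ x, ∫ s, F (pointXY x s) := integral_add_left_eq_self (fun x => ∫ s, F (pointXY x s)) x₀

theorem radon_parabolicMean_eq_zero (F : SchwartzMap (EuclideanSpace ℝ (Fin n ⊕ Unit)) ℝ)
    (hn : 2 ≤ n) {ω : EuclideanSpace ℝ (Fin n)} (hω : ‖ω‖ = 1) (p : ℝ) :
    radon n (pointXY ω 0) (parabolicMean F) p = 0 := by
  obtain ⟨c, T, hc⟩ := exists_radon_eq_mul_integral (n := n) (by simp)
    (norm_pointXY_eq_one (ω := ω) (θ := 0) (by simp [hω]))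
  have hY : pointXY 0 1 ∈ (ℝ ∙ pointXY ω 0)ᗮ :=
    Submodule.mem_orthogonal_singleton_iff_inner_right.mpr (by simp [inner_pointXY])
  have hw : ‖T.symm ⟨_, hY⟩‖ = 1 := by
    rw [LinearIsometryEquiv.norm_map, ← Submodule.norm_coe]
    exact norm_pointXY_eq_one (ω := 0) (θ := 1) (by simp)
  rw [hc, integral_eq_zero_of_integral_add_smul_eq (by simpa using hn) hw _
    (∫ x, ∫ s, F (pointXY x s)) fun v => ?_, mul_zero]
  simp only [map_add, map_smul, LinearIsometryEquiv.apply_symm_apply, Submodule.coe_add,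
    Submodule.coe_smul, ← add_assoc]
  exact integral_parabolicMean_add_smul F _

theorem integrable_comp_parabolicShift (F : SchwartzMap (EuclideanSpace ℝ (Fin n ⊕ Unit)) ℝ)
    {ω : EuclideanSpace ℝ (Fin n)} {θ : ℝ} (hsph : ‖ω‖ ^ 2 + θ ^ 2 = 1) (hdeg : ¬(θ = 0 ∧ 2 ≤ n))
    (T : EuclideanSpace ℝ (Fin n) ≃ₗᵢ[ℝ] (ℝ ∙ pointXY ω θ)ᗮ) (p : ℝ) :
    Integrable (uncurry fun u x : EuclideanSpace ℝ (Fin n) =>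
      F (p • pointXY ω θ + T x + parabolicShift u)) (volume.prod volume) := by
  have hν := norm_pointXY_eq_one hsph
  choose k hk using fun u => exists_eq_inner_smul_add_orthogonal hν (parabolicShift u)
  obtain ⟨C, hF⟩ := F.exists_norm_le_mul_inv_mul_inv (n + 1)
  refine integrable_prod_of_norm_le_mul_comp_add (by fun_prop : Continuous _).aestronglyMeasurable
    ((integrable_inv_one_add_abs_pow volume hsph (by simpa using hdeg) (k := n + 1) (by simp)
      p).const_mul C)
    (integrable_inv_one_add_norm_pow volume (k := n + 1) (by simp)) (fun u => T.symm (k u))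
    fun u x => ?_
  have hdecomp : p • pointXY ω θ + T x + parabolicShift u =
      (p + (⟪ω, u⟫ - θ * ‖u‖ ^ 2)) • pointXY ω θ + T (x + T.symm (k u)) := by
    rw [hk u, inner_parabolicShift, map_add, LinearIsometryEquiv.apply_symm_apply, add_smul,
      Submodule.coe_add]
    abel
  rw [uncurry_apply_pair, hdecomp]
  refine (hF _ _ _ (abs_nonneg _) (norm_nonneg _) ?_).trans_eq (by ring)
  rw [norm_smul_add_orthogonal_sq hν, sq_abs, LinearIsometryEquiv.norm_map]

end Paraboloid

end ParabolicRadon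

open ParabolicRadon in
theorem stmt17_general (n : ℕ)
    (F : SchwartzMap (EuclideanSpace ℝ (Fin n ⊕ Unit)) ℝ)
    (ω : EuclideanSpace ℝ (Fin n)) (θ : ℝ) (hsph : ‖ω‖ ^ 2 + θ ^ 2 = 1) (p : ℝ) :
    let emb : EuclideanSpace ℝ (Fin n) → ℝ → EuclideanSpace ℝ (Fin n ⊕ Unit) :=
      fun x y => (EuclideanSpace.equiv (Fin n ⊕ Unit) ℝ).symm
        (Sum.elim (fun j => x j) (fun _ => y))
    let ν : EuclideanSpace ℝ (Fin n ⊕ Unit) := emb ω θ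
    let R : (EuclideanSpace ℝ (Fin n ⊕ Unit) → ℝ) → ℝ → ℝ := fun φ q =>
      ∫ w in {w : EuclideanSpace ℝ (Fin n ⊕ Unit) | ⟪ν, w⟫ = q}, φ w ∂μH[(n : ℝ)]
    R (fun w => ∫ u : EuclideanSpace ℝ (Fin n), F (w + emb u (-‖u‖ ^ 2))) p
      = ∫ u : EuclideanSpace ℝ (Fin n),
          R (fun w => F w) (p + ⟪ω, u⟫ - θ * ‖u‖ ^ 2) := by
  intro emb ν R
  change radon n (pointXY ω θ) (parabolicMean F) p =
    ∫ u, radon n (pointXY ω θ) F (p + ⟪ω, u⟫ - θ * ‖u‖ ^ 2)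
  by_cases hdeg : θ = 0 ∧ 2 ≤ n
  · obtain ⟨rfl, hn⟩ := hdeg
    have hω : ‖ω‖ = 1 :=
      (pow_eq_one_iff_of_nonneg (norm_nonneg ω) two_ne_zero).mp (by simpa using hsph)
    simp only [zero_mul, sub_zero]
    rw [radon_parabolicMean_eq_zero F hn hω,
      integral_comp_inner_eq_zero (by simpa using hn) hω fun s => radon n (pointXY ω 0) F (p + s)]
  · obtain ⟨c, T, hc⟩ := exists_radon_eq_mul_integral (n := n) (by simp) (norm_pointXY_eq_one hsph)
    simp only [add_sub_assoc, ← inner_parabolicShift, ← radon_comp_add]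
    simp only [hc, parabolicMean, integral_const_mul]
    rw [integral_integral_swap (integrable_comp_parabolicShift F hsph hdeg T p)]

theorem stmt17 (n : ℕ) (hn : 1 ≤ n)
    (F : SchwartzMap (EuclideanSpace ℝ (Fin n ⊕ Unit)) ℝ)
    (ω : EuclideanSpace ℝ (Fin n)) (θ : ℝ) (hsph : ‖ω‖ ^ 2 + θ ^ 2 = 1) (p : ℝ) :
    let emb : EuclideanSpace ℝ (Fin n) → ℝ → EuclideanSpace ℝ (Fin n ⊕ Unit) :=
      fun x y => (EuclideanSpace.equiv (Fin n ⊕ Unit) ℝ).symm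
        (Sum.elim (fun j => x j) (fun _ => y))
    let ν : EuclideanSpace ℝ (Fin n ⊕ Unit) := emb ω θ
    let R : (EuclideanSpace ℝ (Fin n ⊕ Unit) → ℝ) → ℝ → ℝ := fun φ q =>
      ∫ w in {w : EuclideanSpace ℝ (Fin n ⊕ Unit) | ⟪ν, w⟫ = q}, φ w ∂μH[(n : ℝ)]
    R (fun w => ∫ u : EuclideanSpace ℝ (Fin n), F (w + emb u (-‖u‖ ^ 2))) p
      = ∫ u : EuclideanSpace ℝ (Fin n),
          R (fun w => F w) (p + ⟪ω, u⟫ - θ * ‖u‖ ^ 2) :=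
  stmt17_general n F ω θ hsph p
end
end
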